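/- arXiv:1908.10390 — 5 statements merged into one kernel-verified Lean document; each statement's English description precedes it below -/
import Mathlib

section
/- Let 0 ≤ m ≤ N−2 and let F be a family of subsets of {1,...,N}. Then F satisfies both conditions: (a) every member of F intersects every subset of cardinality m+1, and (b) for every subset C of cardinality m there is a member of F disjoint from C — if and only if F contains all subsets of cardinality exactly N−m and every member of F has cardinality at least N−m. -/
theorem stmt_1 (N m : ℕ) (hm : m + 2 ≤ N) (F : Finset (Finset (Fin N))) :
    ((∀ A ∈ F, ∀ S : Finset (Fin N), S.card = m + 1 → (A ∩ S).Nonempty) ∧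
      (∀ C : Finset (Fin N), C.card = m → ∃ A ∈ F, Disjoint A C)) ↔
    ((∀ S : Finset (Fin N), S.card = N - m → S ∈ F) ∧ ∀ A ∈ F, N - m ≤ A.card) := by
  have hN : Fintype.card (Fin N) = N := Fintype.card_fin N
  constructor
  · rintro ⟨ha, hb⟩
    have hcard : ∀ A ∈ F, N - m ≤ A.card := by
      intro A hA
      by_contra h
      push_neg at h
      have h1 : m + 1 ≤ Aᶜ.card := by
        rw [Finset.card_compl, hN]
        have : A.card ≤ N := by
          have := Finset.card_le_univ A; rwa [hN] at this
        omega
      obtain ⟨S, hS, hSc⟩ := Finset.exists_subset_card_eq (s := Aᶜ) (n := m + 1) h1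
      obtain ⟨x, hx⟩ := ha A hA S hSc
      rw [Finset.mem_inter] at hx
      exact (Finset.mem_compl.mp (hS hx.2)) hx.1
    refine ⟨?_, hcard⟩
    intro S hS
    have hC : Sᶜ.card = m := by
      rw [Finset.card_compl, hN, hS]; omega
    obtain ⟨A, hA, hdisj⟩ := hb Sᶜ hC
    have hsub : A ⊆ S := by
      intro x hx
      by_contra hxS
      exact (Finset.disjoint_left.mp hdisj hx) (Finset.mem_compl.mpr hxS)
    have : A = S := Finset.eq_of_subset_of_card_le hsub (by rw [hS]; exact hcard A hA)
    rwa [← this]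
  · rintro ⟨hall, hcard⟩
    constructor
    · intro A hA S hS
      rw [Finset.nonempty_iff_ne_empty]
      intro hemp
      have hdisj : Disjoint A S := Finset.disjoint_iff_inter_eq_empty.mpr hemp
      have := Finset.card_union_of_disjoint hdisj
      have hle : (A ∪ S).card ≤ N := by
        have := Finset.card_le_univ (A ∪ S); rwa [hN] at this
      have := hcard A hA
      omega
    · intro C hC
      refine ⟨Cᶜ, hall Cᶜ ?_, disjoint_compl_left⟩
      rw [Finset.card_compl, hN, hC]
end

section
/- Let p be a prime and 2 ≤ k < p. The array with p^k rows indexed by polynomials f = a_0 + a_1 X + ... + a_(k−1) X^(k−1) over F_p and with p+1 columns given by (a_(k−1), f(0), f(1), ..., f(p−1)) is an orthogonal array OA(p^k, p+1, p, k) of index unity. -/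
/-!
The map sending a coefficient vector to its restriction to `k` columns is a map between two
sets with `p ^ k` elements, so it suffices to show it is injective, i.e. (by linearity) that a
vector `a` whose row vanishes on the `k` columns is zero. Let `f` be the polynomial with
coefficients `a`, of degree `< k`. If the last column is not among the chosen ones, `f` has
`k` distinct roots. If it is, the coefficient of `X ^ (k - 1)` vanishes, so `f` has degree
`< k - 1` and the remaining `k - 1` columns give `k - 1` distinct roots. Either way `f = 0`.
-/

/-- Bush's extended Reed–Solomon row: the coefficients `a` of a polynomial
`f = a 0 + a 1 * X + ... + a (k-1) * X^(k-1)` over `ZMod p` determine a row of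
length `p + 1`: the columns `c < p` carry the value `f(c)`, while the last
column carries the leading coefficient `a (k-1)`. -/
def bushRow (p k : ℕ) (a : Fin k → ZMod p) (c : Fin (p + 1)) : ZMod p :=
  if (c : ℕ) < p then ∑ i : Fin k, a i * ((c : ℕ) : ZMod p) ^ (i : ℕ)
  else if h : 0 < k then a ⟨k - 1, Nat.sub_lt h one_pos⟩ else 0

open Polynomial

theorem Polynomial.eq_zero_of_coeff_pred_eq_zero_of_eval_finset_eq_zero
    {R : Type*} [CommRing R] [IsDomain R] {f : R[X]} {k : ℕ} (s : Finset R)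
    (hdeg : f.degree < k) (hcoeff : f.coeff (k - 1) = 0) (hs : k - 1 ≤ s.card)
    (heval : ∀ x ∈ s, f.eval x = 0) : f = 0 := by
  have hdeg' : f.degree < ↑(k - 1) := by
    rw [degree_lt_iff_coeff_zero] at hdeg ⊢
    intro m hm
    rcases hm.eq_or_lt with rfl | hm
    · exact hcoeff
    · exact hdeg m (by omega)
  exact eq_zero_of_degree_lt_of_eval_finset_eq_zero s
    (hdeg'.trans_le (by exact_mod_cast hs)) heval

section bushRow

variable {p k : ℕ}

theorem bushRow_sub (a b : Fin k → ZMod p) (c : Fin (p + 1)) :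
    bushRow p k (a - b) c = bushRow p k a c - bushRow p k b c := by
  unfold bushRow
  split_ifs <;> simp [sub_mul, Finset.sum_sub_distrib]

theorem bushRow_of_ne_last (a : Fin k → ZMod p) {c : Fin (p + 1)} (hc : c ≠ Fin.last p) :
    bushRow p k a c = (ofFn k a).eval ((c : ℕ) : ZMod p) := by
  rw [bushRow, if_pos (Fin.val_lt_last hc), ofFn_eq_sum_monomial, eval_finsetSum]
  simp only [eval_monomial]

theorem bushRow_last (a : Fin k → ZMod p) :
    bushRow p k a (Fin.last p) = (ofFn k a).coeff (k - 1) := by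
  rcases Nat.eq_zero_or_pos k with rfl | hk
  · simp [bushRow]
  · simp [bushRow, hk]

def bushPoints (S : Finset (Fin (p + 1))) : Finset (ZMod p) :=
  (S.erase (Fin.last p)).image fun c : Fin (p + 1) => ((c : ℕ) : ZMod p)

theorem card_bushPoints (S : Finset (Fin (p + 1))) :
    (bushPoints S).card = (S.erase (Fin.last p)).card := by
  refine Finset.card_image_of_injOn fun c hc d hd hcd => Fin.ext ?_
  have hc' := Fin.val_lt_last (Finset.ne_of_mem_erase hc)
  have hd' := Fin.val_lt_last (Finset.ne_of_mem_erase hd)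
  simpa [ZMod.val_cast_of_lt hc', ZMod.val_cast_of_lt hd'] using congrArg ZMod.val hcd

variable [Fact p.Prime]

theorem eq_zero_of_bushRow_eq_zero {S : Finset (Fin (p + 1))} (hS : S.card = k)
    {a : Fin k → ZMod p} (h : ∀ c ∈ S, bushRow p k a c = 0) : a = 0 := by
  suffices hf : ofFn k a = 0 from injective_ofFn k (hf.trans (map_zero _).symm)
  have heval : ∀ x ∈ bushPoints S, (ofFn k a).eval x = 0 := by
    simp only [bushPoints, Finset.mem_image]
    rintro _ ⟨c, hc, rfl⟩
    rw [← bushRow_of_ne_last a (Finset.ne_of_mem_erase hc), h c (Finset.mem_of_mem_erase hc)]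
  by_cases hlast : Fin.last p ∈ S
  · refine eq_zero_of_coeff_pred_eq_zero_of_eval_finset_eq_zero (bushPoints S)
      (ofFn_degree_lt a) ?_ ?_ heval
    · rw [← bushRow_last, h _ hlast]
    · rw [card_bushPoints, Finset.card_erase_of_mem hlast, hS]
  · refine eq_zero_of_degree_lt_of_eval_finset_eq_zero (bushPoints S) ?_ heval
    rw [card_bushPoints, Finset.erase_eq_of_notMem hlast, hS]
    exact ofFn_degree_lt a

theorem bushRow_restrict_injective {S : Finset (Fin (p + 1))} (hS : S.card = k) :
    Function.Injective fun a => S.restrict (bushRow p k a) := by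
  intro a b hab
  refine sub_eq_zero.mp (eq_zero_of_bushRow_eq_zero hS fun c hc => ?_)
  rw [bushRow_sub, sub_eq_zero]
  exact congrFun hab ⟨c, hc⟩

theorem bushRow_restrict_bijective {S : Finset (Fin (p + 1))} (hS : S.card = k) :
    Function.Bijective fun a => S.restrict (bushRow p k a) :=
  (Fintype.bijective_iff_injective_and_card _).mpr
    ⟨bushRow_restrict_injective hS, by simp [hS]⟩

end bushRow

theorem stmt_7_general (p k : ℕ) (hp : p.Prime) :
    ∀ S : Finset (Fin (p + 1)), S.card = k → ∀ t : Fin (p + 1) → ZMod p,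
      ∃! a : Fin k → ZMod p, ∀ c ∈ S, bushRow p k a c = t c := by
  intro S hS t
  have : Fact p.Prime := ⟨hp⟩
  obtain ⟨a, ha, hunique⟩ := (bushRow_restrict_bijective hS).existsUnique (S.restrict t)
  exact ⟨a, fun c hc => congrFun ha ⟨c, hc⟩, fun b hb => hunique b (funext fun c => hb c c.2)⟩

theorem stmt_7 (p k : ℕ) (hp : p.Prime) (hk : 2 ≤ k) (hkp : k < p) :
    ∀ S : Finset (Fin (p + 1)), S.card = k → ∀ t : Fin (p + 1) → ZMod p,
      ∃! a : Fin k → ZMod p, ∀ c ∈ S, bushRow p k a c = t c :=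
  stmt_7_general p k hp
end

section
/- Let A : Fin M → (Fin N → Fin d) be an injective family of rows such that any two distinct rows agree in at most k−1 columns, and let |ψ⟩ = Σ_i |A(i)_1⟩⊗...⊗|A(i)_N⟩ (unnormalized) in (ℂ^d)^{⊗N}. Then for every subset T of columns with |T| = k, the partial trace of |ψ⟩⟨ψ| over the subsystems in T is a diagonal matrix in the computational product basis of the remaining N−k subsystems. -/
open Finset

lemma card_le_card_filter_eq_of_forall_mem {ι α : Type*} [Fintype ι] [DecidableEq α]
    {f g : ι → α} {T : Finset ι} (h : ∀ c ∈ T, f c = g c) :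
    T.card ≤ (univ.filter fun c => f c = g c).card :=
  card_le_card fun c hc => mem_filter.2 ⟨mem_univ c, h c hc⟩

lemma eq_of_forall_mem_eq_of_card_agree_le {M N d k : ℕ} (hk : 1 ≤ k)
    {A : Fin M → (Fin N → Fin d)}
    (hagree : ∀ i j : Fin M, i ≠ j →
      (univ.filter (fun c : Fin N => A i c = A j c)).card ≤ k - 1)
    {T : Finset (Fin N)} (hT : T.card = k) {i j : Fin M}
    (hij : ∀ c ∈ T, A i c = A j c) : i = j := by
  by_contra hne
  have := card_le_card_filter_eq_of_forall_mem hij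
  have := hagree i j hne
  omega

theorem stmt_8_general (M N d k : ℕ) (hk : 1 ≤ k)
    (A : Fin M → (Fin N → Fin d))
    (hagree : ∀ i j : Fin M, i ≠ j →
      (Finset.univ.filter (fun c : Fin N => A i c = A j c)).card ≤ k - 1)
    (T : Finset (Fin N)) (hT : T.card = k)
    (x y : {c : Fin N // c ∉ T} → Fin d) (hxy : x ≠ y) :
    (∑ i : Fin M, ∑ j : Fin M,
      if (∀ c ∈ T, A i c = A j c) ∧ (∀ c : {c : Fin N // c ∉ T}, A i c = x c) ∧
          (∀ c : {c : Fin N // c ∉ T}, A j c = y c)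
        then (1 : ℂ) else 0) = 0 := by
  refine sum_eq_zero fun i _ => sum_eq_zero fun j _ => if_neg ?_
  rintro ⟨hT', hx, hy⟩
  obtain rfl := eq_of_forall_mem_eq_of_card_agree_le hk hagree hT hT'
  exact hxy (funext fun c => (hx c).symm.trans (hy c))

theorem stmt_8 (M N d k : ℕ) (hk : 1 ≤ k)
    (A : Fin M → (Fin N → Fin d)) (hinj : Function.Injective A)
    (hagree : ∀ i j : Fin M, i ≠ j →
      (Finset.univ.filter (fun c : Fin N => A i c = A j c)).card ≤ k - 1)
    (T : Finset (Fin N)) (hT : T.card = k)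
    (x y : {c : Fin N // c ∉ T} → Fin d) (hxy : x ≠ y) :
    (∑ i : Fin M, ∑ j : Fin M,
      if (∀ c ∈ T, A i c = A j c) ∧ (∀ c : {c : Fin N // c ∉ T}, A i c = x c) ∧
          (∀ c : {c : Fin N // c ∉ T}, A j c = y c)
        then (1 : ℂ) else 0) = 0 :=
  stmt_8_general M N d k hk A hagree T hT x y hxy
end

section
/- Let N > m ≥ 0 and let ω = exp(2πi/(N−m)). The fully symmetric N-qubit state obtained by symmetrizing the product of m copies of |0⟩ and the N−m equatorial qubits (|0⟩ + ω^j|1⟩)/√2 for j = 0,...,N−m−1 is, up to normalization, proportional to √C(N,m)·|0⟩^{⊗N} − (−1)^{N+m}·|D^N_m⟩, where |D^N_m⟩ is the Dicke state with m zeros and N−m ones: |D^N_m⟩ = C(N,m)^{−1/2} Σ_{permutations} P(|0⟩^{⊗m}|1⟩^{⊗(N−m)}). -/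
open Finset Polynomial

/-- The vector of "phases": `0` on the first `m` coordinates, powers of `ω` on the rest. -/
noncomputable def vfun (N m : ℕ) (ω : ℂ) : Fin N → ℂ :=
  fun j => if (j : ℕ) < m then 0 else ω ^ ((j : ℕ) - m)

lemma aux_filter_card {N m : ℕ} (hm : m ≤ N) :
    ((Finset.univ : Finset (Fin N)).filter (fun j : Fin N => (j : ℕ) < m)).card = m := by
  classical
  rw [Finset.card_filter]
  rw [Fin.sum_univ_eq_sum_range (fun i => if i < m then (1 : ℕ) else 0)]
  rw [← Finset.card_filter]
  have h : (Finset.range N).filter (fun i => i < m) = Finset.range m := by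
    ext i; simp only [Finset.mem_filter, Finset.mem_range]; omega
  rw [h, Finset.card_range]

/-- The key permutation-sum identity:
`C(N,k) * ∑_σ ∏_{i∈O} v(σ i) = N! * e_k(v)` where `k = |O|`. -/
lemma aux_perm (N : ℕ) (v : Fin N → ℂ) (O : Finset (Fin N)) :
    (N.choose O.card : ℂ) * ∑ σ : Equiv.Perm (Fin N), ∏ i ∈ O, v (σ i)
      = (N.factorial : ℂ) *
        ∑ T ∈ Finset.powersetCard O.card (Finset.univ : Finset (Fin N)), ∏ t ∈ T, v t := by
  classical
  set k := O.card with hk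
  set pC := Finset.powersetCard k (Finset.univ : Finset (Fin N)) with hpC
  have hmaps : ∀ σ : Equiv.Perm (Fin N), O.image σ ∈ pC := by
    intro σ
    rw [hpC, Finset.mem_powersetCard_univ, Finset.card_image_of_injective _ σ.injective]
  -- the fiber cardinalities
  set W : Finset (Fin N) → ℕ :=
    fun T => (Finset.univ.filter (fun σ : Equiv.Perm (Fin N) => O.image σ = T)).card with hW
  -- uniformity of the fibers
  have huni : ∀ T ∈ pC, ∀ T' ∈ pC, W T = W T' := by
    intro T hT T' hT'
    rw [hpC, Finset.mem_powersetCard_univ] at hT hT'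
    have hcT : Fintype.card {x // x ∈ T} = Fintype.card {x // x ∈ T'} := by
      simp [Fintype.card_coe, hT, hT']
    have hcTc : Fintype.card {x // ¬ x ∈ T} = Fintype.card {x // ¬ x ∈ T'} := by
      rw [Fintype.card_subtype_compl, Fintype.card_subtype_compl, hcT]
    set π : Equiv.Perm (Fin N) :=
      Equiv.subtypeCongr (Fintype.equivOfCardEq hcT) (Fintype.equivOfCardEq hcTc) with hπ
    have hmem : ∀ t ∈ T, π t ∈ T' := by
      intro t ht
      have h1 : π t = ((Fintype.equivOfCardEq hcT) ⟨t, ht⟩ : Fin N) := by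
        simp [hπ, Equiv.subtypeCongr, ht]
      rw [h1]
      exact ((Fintype.equivOfCardEq hcT) ⟨t, ht⟩).2
    have himg : T.image π = T' := by
      apply Finset.eq_of_subset_of_card_le
      · intro y hy
        rcases Finset.mem_image.1 hy with ⟨t, ht, rfl⟩
        exact hmem t ht
      · rw [Finset.card_image_of_injective _ π.injective, hT, hT']
    have himg' : T'.image π.symm = T := by
      rw [← himg, Finset.image_image]
      have : (⇑π.symm ∘ ⇑π) = id := by
        funext a; simp
      rw [this, Finset.image_id]
    rw [hW]
    apply Finset.card_bij' (fun σ _ => π * σ) (fun σ _ => π⁻¹ * σ)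
    · intro σ hσ
      rw [Finset.mem_filter] at hσ ⊢
      refine ⟨Finset.mem_univ _, ?_⟩
      have : ⇑(π * σ) = ⇑π ∘ ⇑σ := rfl
      rw [this, ← Finset.image_image, hσ.2, himg]
    · intro σ hσ
      rw [Finset.mem_filter] at hσ ⊢
      refine ⟨Finset.mem_univ _, ?_⟩
      have h2 : ⇑(π⁻¹ * σ) = ⇑π.symm ∘ ⇑σ := rfl
      rw [h2, ← Finset.image_image, hσ.2, himg']
    · intro σ _; group
    · intro σ _; group
  -- total count
  have htot : ∑ T ∈ pC, W T = N.factorial := by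
    have h1 : ∑ T ∈ pC, ∑ σ ∈ Finset.univ.filter
        (fun σ : Equiv.Perm (Fin N) => O.image σ = T), (1 : ℕ)
        = ∑ σ : Equiv.Perm (Fin N), (1 : ℕ) :=
      Finset.sum_fiberwise_of_maps_to (fun σ _ => hmaps σ) _
    simp only [Finset.sum_const, smul_eq_mul, mul_one] at h1
    rw [hW]
    simp only [h1, Finset.card_univ, Fintype.card_perm, Fintype.card_fin]
  have hkey : ∀ T ∈ pC, (N.choose k) * W T = N.factorial := by
    intro T hT
    have h1 : ∑ T' ∈ pC, W T' = ∑ T' ∈ pC, W T :=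
      Finset.sum_congr rfl (fun T' hT' => huni T' hT' T hT)
    rw [h1, Finset.sum_const, smul_eq_mul] at htot
    rw [← htot, hpC, Finset.card_powersetCard, Finset.card_univ, Fintype.card_fin]
  -- main computation
  have hfib : ∑ σ : Equiv.Perm (Fin N), ∏ i ∈ O, v (σ i)
      = ∑ T ∈ pC, ∑ σ ∈ Finset.univ.filter
          (fun σ : Equiv.Perm (Fin N) => O.image σ = T), ∏ i ∈ O, v (σ i) :=
    (Finset.sum_fiberwise_of_maps_to (fun σ _ => hmaps σ) _).symm
  rw [hfib, Finset.mul_sum, Finset.mul_sum]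
  apply Finset.sum_congr rfl
  intro T hT
  have hinner : ∑ σ ∈ Finset.univ.filter
      (fun σ : Equiv.Perm (Fin N) => O.image σ = T), ∏ i ∈ O, v (σ i)
      = (W T : ℂ) * ∏ t ∈ T, v t := by
    rw [Finset.sum_congr rfl (fun σ hσ => ?_), Finset.sum_const, nsmul_eq_mul]
    rw [Finset.mem_filter] at hσ
    rw [← hσ.2, Finset.prod_image (fun a _ b _ h => σ.injective h)]
  rw [hinner, ← mul_assoc]
  congr 1
  rw [← Nat.cast_mul, hkey T hT]

/-- The product `∏_j (X - v_j) = X^N - X^m`. -/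
lemma aux_P {N m : ℕ} (hm : m < N) {ω : ℂ} (hω : IsPrimitiveRoot ω (N - m)) :
    ∏ j : Fin N, (Polynomial.X - Polynomial.C (vfun N m ω j))
      = Polynomial.X ^ N - Polynomial.X ^ m := by
  classical
  have hn : 0 < N - m := by omega
  -- roots of X^(N-m) - 1
  have h1 : ((Polynomial.X : ℂ[X]) ^ (N - m) - Polynomial.C 1).roots
      = (Multiset.range (N - m)).map (fun i => ω ^ i) := by
    have h := hω.nthRoots_eq (one_pow (N - m))
    rw [Polynomial.nthRoots] at h
    simpa using h
  have hmonic : ((Polynomial.X : ℂ[X]) ^ (N - m) - Polynomial.C 1).Monic :=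
    Polynomial.monic_X_pow_sub_C (1 : ℂ) (by omega)
  have hcard : Multiset.card ((Polynomial.X : ℂ[X]) ^ (N - m) - Polynomial.C 1).roots
      = ((Polynomial.X : ℂ[X]) ^ (N - m) - Polynomial.C 1).natDegree := by
    rw [h1, Polynomial.natDegree_X_pow_sub_C]
    simp
  have h2 := Polynomial.prod_multiset_X_sub_C_of_monic_of_roots_card_eq hmonic hcard
  have h3 : ∏ i ∈ Finset.range (N - m), (Polynomial.X - Polynomial.C (ω ^ i))
      = (Polynomial.X : ℂ[X]) ^ (N - m) - Polynomial.C 1 := by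
    rw [← h2, h1, Multiset.map_map, Finset.prod_eq_multiset_prod, Finset.range_val]
    rfl
  have hsplit := Finset.prod_filter_mul_prod_filter_not (Finset.univ : Finset (Fin N))
    (fun j : Fin N => (j : ℕ) < m) (fun j => Polynomial.X - Polynomial.C (vfun N m ω j))
  rw [← hsplit]
  have hlow : ∏ j ∈ Finset.univ.filter (fun j : Fin N => (j : ℕ) < m),
      (Polynomial.X - Polynomial.C (vfun N m ω j)) = Polynomial.X ^ m := by
    have hc : ∀ j ∈ Finset.univ.filter (fun j : Fin N => (j : ℕ) < m),
        Polynomial.X - Polynomial.C (vfun N m ω j) = (Polynomial.X : ℂ[X]) := by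
      intro j hj
      rw [Finset.mem_filter] at hj
      simp [vfun, hj.2]
    rw [Finset.prod_congr rfl hc, Finset.prod_const, aux_filter_card hm.le]
  have hhigh : ∏ j ∈ Finset.univ.filter (fun j : Fin N => ¬ (j : ℕ) < m),
      (Polynomial.X - Polynomial.C (vfun N m ω j))
      = (Polynomial.X : ℂ[X]) ^ (N - m) - Polynomial.C 1 := by
    rw [← h3]
    apply Finset.prod_nbij' (fun j : Fin N => (j : ℕ) - m)
      (fun i : ℕ => (⟨(i + m) % N, Nat.mod_lt _ (by omega)⟩ : Fin N))
    · intro a ha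
      rw [Finset.mem_filter] at ha
      rw [Finset.mem_range]
      have := a.isLt
      omega
    · intro a ha
      rw [Finset.mem_range] at ha
      rw [Finset.mem_filter]
      refine ⟨Finset.mem_univ _, ?_⟩
      simp only [Fin.val_mk]
      rw [Nat.mod_eq_of_lt (by omega)]
      omega
    · intro a ha
      rw [Finset.mem_filter] at ha
      apply Fin.ext
      simp only [Fin.val_mk]
      have := a.isLt
      have h4 : (a : ℕ) - m + m = (a : ℕ) := by omega
      rw [h4, Nat.mod_eq_of_lt this]
    · intro a ha
      rw [Finset.mem_range] at ha
      simp only [Fin.val_mk]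
      rw [Nat.mod_eq_of_lt (by omega)]
      omega
    · intro a ha
      rw [Finset.mem_filter] at ha
      simp [vfun, ha.2]
  rw [hlow, hhigh, map_one, mul_sub, mul_one, ← pow_add]
  congr 2
  omega

/-- Values of the elementary symmetric sums of `vfun`. -/
lemma aux_E {N m : ℕ} (hm : m < N) {ω : ℂ} (hω : IsPrimitiveRoot ω (N - m))
    (k : ℕ) (hk : k ≤ N) :
    ∑ T ∈ Finset.powersetCard k (Finset.univ : Finset (Fin N)), ∏ t ∈ T, vfun N m ω t
      = if k = 0 then 1 else if k = N - m then (-1 : ℂ) ^ (N - m + 1) else 0 := by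
  classical
  set v := vfun N m ω with hv
  have hcard : Multiset.card ((Finset.univ : Finset (Fin N)).val.map v) = N := by simp
  have hco := Multiset.prod_X_sub_C_coeff ((Finset.univ : Finset (Fin N)).val.map v)
    (show N - k ≤ Multiset.card ((Finset.univ : Finset (Fin N)).val.map v) by
      rw [hcard]; exact Nat.sub_le N k)
  rw [hcard, Nat.sub_sub_self hk] at hco
  have hprod : (((Finset.univ : Finset (Fin N)).val.map v).map
      (fun t => Polynomial.X - Polynomial.C t)).prod = Polynomial.X ^ N - Polynomial.X ^ m := by
    rw [Multiset.map_map]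
    have : ((fun t => Polynomial.X - Polynomial.C t) ∘ v)
        = fun j => Polynomial.X - Polynomial.C (v j) := rfl
    rw [this, ← Finset.prod_eq_multiset_prod]
    exact aux_P hm hω
  rw [hprod] at hco
  have hE : (((Finset.univ : Finset (Fin N)).val.map v).esymm k)
      = ∑ T ∈ Finset.powersetCard k (Finset.univ : Finset (Fin N)), ∏ t ∈ T, v t :=
    Finset.esymm_map_val v _ k
  rw [hE] at hco
  -- compute the coefficient
  have hcoeff : ((Polynomial.X : ℂ[X]) ^ N - Polynomial.X ^ m).coeff (N - k)
      = if k = 0 then 1 else if k = N - m then -1 else 0 := by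
    rw [Polynomial.coeff_sub, Polynomial.coeff_X_pow, Polynomial.coeff_X_pow]
    by_cases h0 : k = 0
    · rw [if_pos (by omega : N - k = N), if_neg (by omega : ¬ N - k = m), if_pos h0]
      norm_num
    · by_cases h1 : k = N - m
      · rw [if_neg (by omega : ¬ N - k = N), if_pos (by omega : N - k = m), if_neg h0,
          if_pos h1]
        norm_num
      · rw [if_neg (by omega : ¬ N - k = N), if_neg (by omega : ¬ N - k = m), if_neg h0,
          if_neg h1]
        norm_num
  rw [hcoeff] at hco
  have h4 : ((-1 : ℂ)) ^ k * ((-1 : ℂ)) ^ k = 1 := by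
    rw [← mul_pow]; norm_num
  have h5 : ∑ T ∈ Finset.powersetCard k (Finset.univ : Finset (Fin N)), ∏ t ∈ T, v t
      = (-1 : ℂ) ^ k * (if k = 0 then 1 else if k = N - m then -1 else 0) := by
    calc ∑ T ∈ Finset.powersetCard k (Finset.univ : Finset (Fin N)), ∏ t ∈ T, v t
        = ((-1 : ℂ) ^ k * (-1 : ℂ) ^ k) *
            ∑ T ∈ Finset.powersetCard k (Finset.univ : Finset (Fin N)), ∏ t ∈ T, v t := by
          rw [h4, one_mul]
      _ = (-1 : ℂ) ^ k * ((-1 : ℂ) ^ k *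
            ∑ T ∈ Finset.powersetCard k (Finset.univ : Finset (Fin N)), ∏ t ∈ T, v t) := by
          ring
      _ = (-1 : ℂ) ^ k * (if k = 0 then 1 else if k = N - m then -1 else 0) := by
          rw [← hco]
  rw [h5]
  by_cases h0 : k = 0
  · simp [h0]
  · by_cases h1 : k = N - m
    · subst h1
      rw [if_neg (by omega : ¬ N - m = 0), if_neg (by omega : ¬ N - m = 0), if_pos rfl,
        if_pos rfl, pow_succ]
    · simp [h0, h1]

lemma fin2_eq_zero (b : Fin 2) (h : b ≠ 1) : b = 0 := by
  fin_cases b <;> simp_all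

theorem stmt_16 (N m : ℕ) (hm : m < N) :
    let ω : ℂ := Complex.exp (2 * Real.pi * Complex.I / (N - m : ℕ))
    let η : Fin N → Fin 2 → ℂ := fun j b =>
      if (j : ℕ) < m then (if b = 0 then 1 else 0)
      else if b = 0 then ((Real.sqrt 2 : ℝ) : ℂ)⁻¹
      else ω ^ ((j : ℕ) - m) * ((Real.sqrt 2 : ℝ) : ℂ)⁻¹
    let ψ : (Fin N → Fin 2) → ℂ := fun x =>
      ∑ σ : Equiv.Perm (Fin N), ∏ i : Fin N, η (σ i) (x i)
    let dicke : (Fin N → Fin 2) → ℂ := fun x =>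
      if (Finset.univ.filter (fun i => x i = 1)).card = N - m
        then ((Real.sqrt (N.choose m) : ℝ) : ℂ)⁻¹ else 0
    let e0 : (Fin N → Fin 2) → ℂ := fun x => if x = (fun _ => 0) then 1 else 0
    ∃ c : ℂ, c ≠ 0 ∧
      ψ = c • (((Real.sqrt (N.choose m) : ℝ) : ℂ) • e0 - ((-1 : ℂ) ^ (N + m)) • dicke) := by
  classical
  intro ω η ψ dicke e0
  have hω : IsPrimitiveRoot ω (N - m) := Complex.isPrimitiveRoot_exp (N - m) (by omega)
  set s2 : ℂ := ((Real.sqrt 2 : ℝ) : ℂ)⁻¹ with hs2def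
  set S : ℂ := ((Real.sqrt (N.choose m) : ℝ) : ℂ) with hSdef
  have hs2 : s2 ≠ 0 := by
    rw [hs2def]
    apply inv_ne_zero
    rw [Complex.ofReal_ne_zero]
    exact ne_of_gt (Real.sqrt_pos.2 two_pos)
  have hS0 : S ≠ 0 := by
    rw [hSdef, Complex.ofReal_ne_zero]
    apply ne_of_gt
    apply Real.sqrt_pos.2
    exact_mod_cast Nat.choose_pos hm.le
  have hSS : S * S = (N.choose m : ℂ) := by
    rw [hSdef, ← Complex.ofReal_mul, Real.mul_self_sqrt (by positivity)]
    norm_num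
  refine ⟨s2 ^ (N - m) * (N.factorial : ℂ) * S⁻¹, ?_, ?_⟩
  · exact mul_ne_zero (mul_ne_zero (pow_ne_zero _ hs2)
      (Nat.cast_ne_zero.2 N.factorial_ne_zero)) (inv_ne_zero hS0)
  funext x
  set v := vfun N m ω with hv
  set O := Finset.univ.filter (fun i => x i = 1) with hO
  have hkN : O.card ≤ N := by
    calc O.card ≤ (Finset.univ : Finset (Fin N)).card := Finset.card_filter_le _ _
      _ = N := by simp
  -- Step 1: factor the product
  have hψx : ψ x = s2 ^ (N - m) * ∑ σ : Equiv.Perm (Fin N), ∏ i ∈ O, v (σ i) := by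
    show (∑ σ : Equiv.Perm (Fin N), ∏ i : Fin N, η (σ i) (x i)) = _
    rw [Finset.mul_sum]
    apply Finset.sum_congr rfl
    intro σ _
    have hη : ∀ j : Fin N, ∀ b : Fin 2,
        η j b = (if (j : ℕ) < m then (1 : ℂ) else s2) * (v j) ^ (b : ℕ) := by
      intro j b
      show (if (j : ℕ) < m then (if b = 0 then (1:ℂ) else 0)
        else if b = 0 then s2 else ω ^ ((j : ℕ) - m) * s2) = _
      fin_cases b <;> by_cases hj : (j : ℕ) < m <;>
        simp [hv, vfun, hj, mul_comm]
    calc ∏ i : Fin N, η (σ i) (x i)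
        = ∏ i : Fin N, ((if ((σ i : Fin N) : ℕ) < m then (1 : ℂ) else s2)
            * (v (σ i)) ^ ((x i : ℕ))) := by
          apply Finset.prod_congr rfl
          intro i _
          exact hη (σ i) (x i)
      _ = (∏ i : Fin N, (if ((σ i : Fin N) : ℕ) < m then (1 : ℂ) else s2))
            * ∏ i : Fin N, (v (σ i)) ^ ((x i : ℕ)) := Finset.prod_mul_distrib
      _ = s2 ^ (N - m) * ∏ i ∈ O, v (σ i) := by
          congr 1
          · rw [Equiv.prod_comp σ (fun j : Fin N => if (j : ℕ) < m then (1 : ℂ) else s2)]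
            rw [← Finset.prod_filter_mul_prod_filter_not
              (Finset.univ : Finset (Fin N)) (fun j : Fin N => (j : ℕ) < m)]
            rw [Finset.prod_congr rfl (fun j hj => if_pos (Finset.mem_filter.1 hj).2),
              Finset.prod_const_one, one_mul]
            rw [Finset.prod_congr rfl (fun j hj => if_neg (Finset.mem_filter.1 hj).2),
              Finset.prod_const]
            congr 1
            have := Finset.card_filter_add_card_filter_not
              (s := (Finset.univ : Finset (Fin N))) (p := fun j : Fin N => (j : ℕ) < m)
            rw [aux_filter_card hm.le] at this
            simp only [Finset.card_univ, Fintype.card_fin] at this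
            omega
          · rw [← Finset.prod_subset (Finset.subset_univ O)
              (fun i _ hi => ?_)]
            · apply Finset.prod_congr rfl
              intro i hi
              rw [hO, Finset.mem_filter] at hi
              rw [hi.2]
              norm_num
            · have hxi : x i = 0 := by
                apply fin2_eq_zero
                intro h1
                exact hi (by rw [hO, Finset.mem_filter]; exact ⟨Finset.mem_univ _, h1⟩)
              rw [hxi]
              norm_num
  -- Step 2: the permutation sum
  have hperm := aux_perm N v O
  have hEval := aux_E hm hω O.card hkN
  rw [hEval] at hperm
  have hC : ((N.choose O.card : ℕ) : ℂ) ≠ 0 :=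
    Nat.cast_ne_zero.2 (Nat.choose_pos hkN).ne'
  -- RHS evaluation
  have hRHS : ((s2 ^ (N - m) * (N.factorial : ℂ) * S⁻¹) •
      (S • e0 - ((-1 : ℂ) ^ (N + m)) • dicke)) x
      = s2 ^ (N - m) * (N.factorial : ℂ) * S⁻¹ *
        (S * e0 x - ((-1 : ℂ) ^ (N + m)) * dicke x) := by
    simp [smul_eq_mul]
  rw [hRHS]
  have hsign : ((-1 : ℂ)) ^ (N + m) = ((-1 : ℂ)) ^ (N - m) := by
    have h1 : N + m = (N - m) + 2 * m := by omega
    rw [h1, pow_add, pow_mul]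
    norm_num
  by_cases h0 : O.card = 0
  · -- x is identically zero
    have hx : x = (fun _ => 0) := by
      funext i
      apply fin2_eq_zero
      intro h1
      have : i ∈ O := by rw [hO, Finset.mem_filter]; exact ⟨Finset.mem_univ _, h1⟩
      rw [Finset.card_eq_zero.1 h0] at this
      exact absurd this (Finset.notMem_empty i)
    have he0 : e0 x = 1 := by
      show (if x = (fun _ => 0) then (1:ℂ) else 0) = 1
      rw [if_pos hx]
    have hdicke : dicke x = 0 := by
      show (if (Finset.univ.filter (fun i => x i = 1)).card = N - m then S⁻¹ else 0) = 0
      rw [if_neg]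
      rw [← hO, h0]
      omega
    rw [he0, hdicke]
    rw [hψx]
    have hOempty : O = ∅ := Finset.card_eq_zero.1 h0
    have hsum : ∑ σ : Equiv.Perm (Fin N), ∏ i ∈ O, v (σ i) = (N.factorial : ℂ) := by
      rw [hOempty]
      simp [Finset.card_univ, Fintype.card_perm, Fintype.card_fin]
    rw [hsum]
    field_simp
    ring
  · by_cases h1 : O.card = N - m
    · -- the Dicke component
      have he0 : e0 x = 0 := by
        show (if x = (fun _ => 0) then (1:ℂ) else 0) = 0
        rw [if_neg]
        intro hx
        apply h0
        rw [hO, hx]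
        simp
      have hdicke : dicke x = S⁻¹ := by
        show (if (Finset.univ.filter (fun i => x i = 1)).card = N - m then S⁻¹ else 0) = S⁻¹
        rw [if_pos]
        rw [← hO]
        exact h1
      rw [he0, hdicke]
      rw [hψx]
      rw [if_neg h0, if_pos h1] at hperm
      have hch : N.choose O.card = N.choose m := by
        rw [h1, Nat.choose_symm hm.le]
      rw [hch] at hperm hC
      have hsig : ∑ σ : Equiv.Perm (Fin N), ∏ i ∈ O, v (σ i)
          = (N.factorial : ℂ) * (-1 : ℂ) ^ (N - m + 1) / (N.choose m : ℂ) := by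
        rw [eq_div_iff hC, mul_comm]
        exact hperm
      rw [hsig, hsign, ← hSS]
      field_simp
      ring
    · -- vanishing case
      have he0 : e0 x = 0 := by
        show (if x = (fun _ => 0) then (1:ℂ) else 0) = 0
        rw [if_neg]
        intro hx
        apply h0
        rw [hO, hx]
        simp
      have hdicke : dicke x = 0 := by
        show (if (Finset.univ.filter (fun i => x i = 1)).card = N - m then S⁻¹ else 0) = 0
        rw [if_neg]
        rw [← hO]
        exact h1
      rw [he0, hdicke]
      rw [if_neg h0, if_neg h1, mul_zero] at hperm
      rw [hψx]
      have hsig : ∑ σ : Equiv.Perm (Fin N), ∏ i ∈ O, v (σ i) = 0 :=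
        (mul_eq_zero.1 hperm).resolve_left hC
      rw [hsig]
      ring
end

section
/- For natural numbers N ≥ 2 and 0 ≤ m ≤ N−2, the number of subsets of {1,...,N} of cardinality N−m equals C(N,m), and the family of all such subsets is the unique inclusion-minimal family F of subsets (each of size ≥ 2) satisfying: every member of F meets every (m+1)-subset, and every m-subset is avoided by some member of F. -/
theorem stmt_19 (N m : ℕ) (hN : 2 ≤ N) (hm : m + 2 ≤ N) :
    let P : Finset (Finset (Fin N)) → Prop := fun F =>
      (∀ A ∈ F, 2 ≤ A.card) ∧
      (∀ A ∈ F, ∀ S : Finset (Fin N), S.card = m + 1 → (A ∩ S).Nonempty) ∧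
      (∀ C : Finset (Fin N), C.card = m → ∃ A ∈ F, Disjoint A C)
    let F0 : Finset (Finset (Fin N)) :=
      Finset.powersetCard (N - m) (Finset.univ : Finset (Fin N))
    F0.card = N.choose m ∧ P F0 ∧ (∀ G ⊂ F0, ¬ P G) ∧
    (∀ F : Finset (Finset (Fin N)), P F → (∀ G ⊂ F, ¬ P G) → F = F0) := by
  intro P F0
  have hmem : ∀ A : Finset (Fin N), A ∈ F0 ↔ A.card = N - m := by
    intro A
    simp [F0, Finset.mem_powersetCard, Finset.subset_univ]
  have hcompl : ∀ A : Finset (Fin N), Aᶜ.card = N - A.card := by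
    intro A
    rw [Finset.card_compl, Fintype.card_fin]
  -- P F0
  have hPF0 : P F0 := by
    refine ⟨?_, ?_, ?_⟩
    · intro A hA
      rw [hmem] at hA
      omega
    · intro A hA S hS
      rw [hmem] at hA
      by_contra h
      rw [Finset.not_nonempty_iff_eq_empty, ← Finset.disjoint_iff_inter_eq_empty] at h
      have := Finset.card_union_of_disjoint h
      have hle : (A ∪ S).card ≤ N := by
        have := Finset.card_le_univ (A ∪ S)
        simpa using this
      omega
    · intro C hC
      refine ⟨Cᶜ, ?_, disjoint_compl_left⟩
      rw [hmem, hcompl, hC]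
  refine ⟨?_, hPF0, ?_, ?_⟩
  · rw [Finset.card_powersetCard, Finset.card_univ, Fintype.card_fin,
      Nat.choose_symm (by omega : m ≤ N)]
  · -- minimality of F0
    intro G hG hPG
    obtain ⟨A0, hA0F0, hA0G⟩ := Finset.exists_of_ssubset hG
    rw [hmem] at hA0F0
    obtain ⟨A, hAG, hdisj⟩ := hPG.2.2 A0ᶜ (by rw [hcompl, hA0F0]; omega)
    have hsub : A ⊆ A0 := by
      have := le_of_le_of_eq (le_compl_iff_disjoint_right.mpr hdisj) (compl_compl _)
      exact this
    have hAF0 : A ∈ F0 := hG.1 hAG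
    rw [hmem] at hAF0
    have : A = A0 := Finset.eq_of_subset_of_card_le hsub (by omega)
    exact hA0G (this ▸ hAG)
  · -- uniqueness
    intro F hPF hmin
    have hsub : F0 ⊆ F := by
      intro A hA
      rw [hmem] at hA
      obtain ⟨B, hBF, hdisj⟩ := hPF.2.2 Aᶜ (by rw [hcompl, hA]; omega)
      have hBsub : B ⊆ A := le_of_le_of_eq (le_compl_iff_disjoint_right.mpr hdisj) (compl_compl _)
      have hBcard : N - m ≤ B.card := by
        by_contra h
        push_neg at h
        have hc : m + 1 ≤ Bᶜ.card := by rw [hcompl]; omega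
        obtain ⟨S, hSsub, hScard⟩ := Finset.exists_subset_card_eq hc
        have hne := hPF.2.1 B hBF S hScard
        obtain ⟨x, hx⟩ := hne
        rw [Finset.mem_inter] at hx
        exact (Finset.mem_compl.mp (hSsub hx.2)) hx.1
      have : B = A := Finset.eq_of_subset_of_card_le hBsub (by omega)
      exact this ▸ hBF
    by_contra hne
    exact hmin F0 (lt_of_le_of_ne hsub (fun h => hne h.symm)) hPF0
end
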